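/- arXiv:1903.00193 — 4 statements merged into one kernel-verified Lean document; each statement's English description precedes it below -/
import Mathlib

section
/- Let M,N be positive integers and let f:{0,…,M−1}×{0,…,N−1}→ℍ be a discrete quaternion signal that is not identically zero. Then N_{(t,s)} · N_{(u,v)} ≥ M·N, where N_{(t,s)} is the number of nonzero values of f and N_{(u,v)} is the number of nonzero values of its two-sided discrete quaternion Fourier transform f̂. -/
open scoped BigOperators Classical

noncomputable def qI : Quaternion ℝ := ⟨0, 1, 0, 0⟩
noncomputable def qJ : Quaternion ℝ := ⟨0, 0, 1, 0⟩

/-- exp(θ q) = cos θ + (sin θ) q for a (unit pure) quaternion q. -/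
noncomputable def qexp (q : Quaternion ℝ) (θ : ℝ) : Quaternion ℝ :=
  ((Real.cos θ : ℝ) : Quaternion ℝ) + (Real.sin θ) • q

/-- Two-sided discrete quaternion Fourier transform. -/
noncomputable def dqft (M N : ℕ) (f : Fin M → Fin N → Quaternion ℝ)
    (u : Fin M) (v : Fin N) : Quaternion ℝ :=
  ((Real.sqrt (M * N))⁻¹ : ℝ) •
    ∑ t : Fin M, ∑ s : Fin N,
      qexp qI (-(2 * Real.pi * u.val * t.val / M)) * f t s *
        qexp qJ (-(2 * Real.pi * v.val * s.val / N))

lemma qI_mul_qI : qI * qI = -1 := by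
  ext <;> simp only [Quaternion.re_mul, Quaternion.imI_mul, Quaternion.imJ_mul, Quaternion.imK_mul, Quaternion.re_neg, Quaternion.imI_neg, Quaternion.imJ_neg, Quaternion.imK_neg, Quaternion.re_one, Quaternion.imI_one, Quaternion.imJ_one, Quaternion.imK_one] <;> simp [qI]

lemma qJ_mul_qJ : qJ * qJ = -1 := by
  ext <;> simp only [Quaternion.re_mul, Quaternion.imI_mul, Quaternion.imJ_mul, Quaternion.imK_mul, Quaternion.re_neg, Quaternion.imI_neg, Quaternion.imJ_neg, Quaternion.imK_neg, Quaternion.re_one, Quaternion.imI_one, Quaternion.imJ_one, Quaternion.imK_one] <;> simp [qJ]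

noncomputable def cI : ℂ →ₐ[ℝ] Quaternion ℝ := Complex.liftAux qI qI_mul_qI
noncomputable def cJ : ℂ →ₐ[ℝ] Quaternion ℝ := Complex.liftAux qJ qJ_mul_qJ

lemma qexp_eq_cI (θ : ℝ) : qexp qI θ = cI (Complex.exp (θ * Complex.I)) := by
  simp [cI, qexp, Complex.liftAux_apply, Complex.exp_ofReal_mul_I_re,
    Complex.exp_ofReal_mul_I_im, Quaternion.algebraMap_def]

lemma qexp_eq_cJ (θ : ℝ) : qexp qJ θ = cJ (Complex.exp (θ * Complex.I)) := by
  simp [cJ, qexp, Complex.liftAux_apply, Complex.exp_ofReal_mul_I_re,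
    Complex.exp_ofReal_mul_I_im, Quaternion.algebraMap_def]

lemma qexp_qI_mul (a b : ℝ) : qexp qI a * qexp qI b = qexp qI (a + b) := by
  rw [qexp_eq_cI, qexp_eq_cI, qexp_eq_cI, ← map_mul, ← Complex.exp_add]
  congr 1
  push_cast
  ring

lemma qexp_qJ_mul (a b : ℝ) : qexp qJ a * qexp qJ b = qexp qJ (a + b) := by
  rw [qexp_eq_cJ, qexp_eq_cJ, qexp_eq_cJ, ← map_mul, ← Complex.exp_add]
  congr 1
  push_cast
  ring

lemma norm_qexp_qI (θ : ℝ) : ‖qexp qI θ‖ = 1 := by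
  have h : ‖qexp qI θ‖ * ‖qexp qI θ‖ = 1 := by
    rw [← Quaternion.normSq_eq_norm_mul_self]
    simp only [qexp, qI, Quaternion.normSq_def']
    norm_num [Quaternion.re_add, Quaternion.imI_add, Quaternion.imJ_add, Quaternion.imK_add,
      QuaternionAlgebra.re_smul, QuaternionAlgebra.imI_smul, QuaternionAlgebra.imJ_smul, QuaternionAlgebra.imK_smul,
      Quaternion.re_coe, Quaternion.imI_coe, Quaternion.imJ_coe, Quaternion.imK_coe,
      Real.sin_sq_add_cos_sq]
    change (Real.cos θ + Real.sin θ * 0) ^ 2 + (Real.sin θ * 1) ^ 2 + (Real.sin θ * 0) ^ 2 + (Real.sin θ * 0) ^ 2 = 1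
    simp [Real.sin_sq_add_cos_sq]
  nlinarith [norm_nonneg (qexp qI θ)]

lemma norm_qexp_qJ (θ : ℝ) : ‖qexp qJ θ‖ = 1 := by
  have h : ‖qexp qJ θ‖ * ‖qexp qJ θ‖ = 1 := by
    rw [← Quaternion.normSq_eq_norm_mul_self]
    simp only [qexp, qJ, Quaternion.normSq_def']
    norm_num [Quaternion.re_add, Quaternion.imI_add, Quaternion.imJ_add, Quaternion.imK_add,
      QuaternionAlgebra.re_smul, QuaternionAlgebra.imI_smul, QuaternionAlgebra.imJ_smul, QuaternionAlgebra.imK_smul,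
      Quaternion.re_coe, Quaternion.imI_coe, Quaternion.imJ_coe, Quaternion.imK_coe,
      Real.sin_sq_add_cos_sq]
    change (Real.cos θ + Real.sin θ * 0) ^ 2 + (Real.sin θ * 0) ^ 2 + (Real.sin θ * 1) ^ 2 + (Real.sin θ * 0) ^ 2 = 1
    simp [Real.sin_sq_add_cos_sq]
  nlinarith [norm_nonneg (qexp qJ θ)]

lemma sum_exp_fin (M : ℕ) (hM : 0 < M) (t t' : Fin M) :
    ∑ u : Fin M,
      Complex.exp (2 * Real.pi * Complex.I * (((t : ℕ) : ℂ) - ((t' : ℕ) : ℂ)) * (u : ℕ) / M)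
      = if t = t' then (M : ℂ) else 0 := by
  set ω : ℂ := Complex.exp (2 * Real.pi * Complex.I * (((t : ℕ) : ℂ) - ((t' : ℕ) : ℂ)) / M)
    with hω
  have hterm : ∀ u : Fin M,
      Complex.exp (2 * Real.pi * Complex.I * (((t : ℕ) : ℂ) - ((t' : ℕ) : ℂ)) * (u : ℕ) / M)
        = ω ^ (u : ℕ) := by
    intro u
    rw [hω, ← Complex.exp_nat_mul]
    congr 1
    ring
  rw [Finset.sum_congr rfl (fun u _ => hterm u)]
  by_cases h : t = t'
  · subst h
    have hω1 : ω = 1 := by rw [hω]; simp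
    simp [hω1, Finset.card_univ]
  · rw [if_neg h]
    have hM' : (M : ℂ) ≠ 0 := Nat.cast_ne_zero.mpr hM.ne'
    have h2 : (2 : ℂ) * (Real.pi : ℂ) * Complex.I ≠ 0 := by
      simp [Real.pi_ne_zero, Complex.I_ne_zero]
    set d : ℤ := ((t : ℕ) : ℤ) - ((t' : ℕ) : ℤ) with hd
    have hdc : (((t : ℕ) : ℂ) - ((t' : ℕ) : ℂ)) = (d : ℂ) := by push_cast [hd]; ring
    have hωM : ω ^ M = 1 := by
      rw [hω, ← Complex.exp_nat_mul]
      have harg : (M : ℂ) * (2 * (Real.pi : ℂ) * Complex.I * (((t : ℕ) : ℂ) - ((t' : ℕ) : ℂ)) / M)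
          = (d : ℂ) * (2 * (Real.pi : ℂ) * Complex.I) := by
        rw [hdc]
        field_simp
      rw [harg]
      exact Complex.exp_int_mul_two_pi_mul_I d
    have hω1 : ω ≠ 1 := by
      intro hcon
      rw [hω, Complex.exp_eq_one_iff] at hcon
      obtain ⟨n, hn⟩ := hcon
      have key : (d : ℂ) = (n : ℂ) * (M : ℂ) := by
        have hn' : 2 * (Real.pi : ℂ) * Complex.I * (d : ℂ)
            = 2 * (Real.pi : ℂ) * Complex.I * ((n : ℂ) * (M : ℂ)) := by
          rw [← hdc]
          field_simp at hn
          linear_combination (2 * (Real.pi : ℂ) * Complex.I) * hn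
        exact mul_left_cancel₀ h2 hn'
      have hdz : d = n * M := by exact_mod_cast key
      have habs : |d| < M := by
        have h1 : ((t : ℕ) : ℤ) < M := by exact_mod_cast t.isLt
        have h2 : ((t' : ℕ) : ℤ) < M := by exact_mod_cast t'.isLt
        have h3 : (0 : ℤ) ≤ ((t : ℕ) : ℤ) := Int.natCast_nonneg _
        have h4 : (0 : ℤ) ≤ ((t' : ℕ) : ℤ) := Int.natCast_nonneg _
        rw [hd, abs_lt]; omega
      have hne : d ≠ 0 := by
        intro h0
        rw [hd, sub_eq_zero] at h0
        exact h (Fin.ext (by exact_mod_cast h0))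
      have hn0 : n ≠ 0 := by
        intro h0; rw [h0] at hdz; simp at hdz; exact hne hdz
      have : (M : ℤ) ≤ |d| := by
        rw [hdz, abs_mul, abs_of_nonneg (Int.natCast_nonneg M)]
        nlinarith [Int.one_le_abs hn0, abs_nonneg n, Int.natCast_nonneg M]
      omega
    rw [Fin.sum_univ_eq_sum_range (fun i => ω ^ i) M, geom_sum_eq hω1, hωM]
    simp

lemma qsum_I (M : ℕ) (hM : 0 < M) (t t' : Fin M) :
    ∑ u : Fin M,
      qexp qI (2 * Real.pi * u.val * t.val / M) * qexp qI (-(2 * Real.pi * u.val * t'.val / M))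
      = if t = t' then (M : Quaternion ℝ) else 0 := by
  have hstep : ∀ u : Fin M,
      qexp qI (2 * Real.pi * u.val * t.val / M) * qexp qI (-(2 * Real.pi * u.val * t'.val / M))
        = cI (Complex.exp
            (2 * Real.pi * Complex.I * (((t : ℕ) : ℂ) - ((t' : ℕ) : ℂ)) * (u : ℕ) / M)) := by
    intro u
    rw [qexp_qI_mul, qexp_eq_cI]
    congr 1
    congr 1
    push_cast
    ring
  rw [Finset.sum_congr rfl (fun u _ => hstep u), ← map_sum, sum_exp_fin M hM t t']
  split_ifs
  · rw [map_natCast]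
  · rw [map_zero]

lemma qsum_J (N : ℕ) (hN : 0 < N) (s s' : Fin N) :
    ∑ v : Fin N,
      qexp qJ (-(2 * Real.pi * v.val * s'.val / N)) * qexp qJ (2 * Real.pi * v.val * s.val / N)
      = if s = s' then (N : Quaternion ℝ) else 0 := by
  have hstep : ∀ v : Fin N,
      qexp qJ (-(2 * Real.pi * v.val * s'.val / N)) * qexp qJ (2 * Real.pi * v.val * s.val / N)
        = cJ (Complex.exp
            (2 * Real.pi * Complex.I * (((s : ℕ) : ℂ) - ((s' : ℕ) : ℂ)) * (v : ℕ) / N)) := by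
    intro v
    rw [qexp_qJ_mul, qexp_eq_cJ]
    congr 1
    congr 1
    push_cast
    ring
  rw [Finset.sum_congr rfl (fun v _ => hstep v), ← map_sum, sum_exp_fin N hN s s']
  split_ifs
  · rw [map_natCast]
  · rw [map_zero]

lemma sum_factor {M N : ℕ} (A : Fin M → Quaternion ℝ) (B : Fin N → Quaternion ℝ)
    (C : Quaternion ℝ) :
    ∑ u : Fin M, ∑ v : Fin N, A u * C * B v = (∑ u : Fin M, A u) * C * (∑ v : Fin N, B v) := by
  rw [Finset.sum_mul, Finset.sum_mul]
  exact Finset.sum_congr rfl fun u _ => (Finset.mul_sum _ _ _).symm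

noncomputable def Tq (M N : ℕ) (f : Fin M → Fin N → Quaternion ℝ) (t : Fin M) (s : Fin N)
    (u : Fin M) (v : Fin N) (t' : Fin M) (s' : Fin N) : Quaternion ℝ :=
  (qexp qI (2 * Real.pi * u.val * t.val / M) * qexp qI (-(2 * Real.pi * u.val * t'.val / M)))
    * f t' s' *
  (qexp qJ (-(2 * Real.pi * v.val * s'.val / N)) * qexp qJ (2 * Real.pi * v.val * s.val / N))

lemma quad_swap {α : Type*} [AddCommMonoid α] {M N : ℕ}
    (T : Fin M → Fin N → Fin M → Fin N → α) :
    ∑ u : Fin M, ∑ v : Fin N, ∑ t' : Fin M, ∑ s' : Fin N, T u v t' s'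
      = ∑ t' : Fin M, ∑ s' : Fin N, ∑ u : Fin M, ∑ v : Fin N, T u v t' s' := by
  have e1 : ∑ u : Fin M, ∑ v : Fin N, ∑ t' : Fin M, ∑ s' : Fin N, T u v t' s'
      = ∑ p : Fin M × Fin N, ∑ q : Fin M × Fin N, T p.1 p.2 q.1 q.2 := by
    simp [Fintype.sum_prod_type]
  have e2 : ∑ t' : Fin M, ∑ s' : Fin N, ∑ u : Fin M, ∑ v : Fin N, T u v t' s'
      = ∑ q : Fin M × Fin N, ∑ p : Fin M × Fin N, T p.1 p.2 q.1 q.2 := by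
    simp [Fintype.sum_prod_type]
  rw [e1, e2, Finset.sum_comm]

set_option maxHeartbeats 1600000 in
lemma dqft_inv (M N : ℕ) (hM : 0 < M) (hN : 0 < N) (f : Fin M → Fin N → Quaternion ℝ)
    (t : Fin M) (s : Fin N) :
    ((Real.sqrt (M * N))⁻¹ : ℝ) •
      ∑ u : Fin M, ∑ v : Fin N,
        qexp qI (2 * Real.pi * u.val * t.val / M) * dqft M N f u v *
          qexp qJ (2 * Real.pi * v.val * s.val / N) = f t s := by
  set c : ℝ := (Real.sqrt (M * N))⁻¹ with hc
  have h1 : ∀ u : Fin M, ∀ v : Fin N,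
      qexp qI (2 * Real.pi * u.val * t.val / M) * dqft M N f u v *
        qexp qJ (2 * Real.pi * v.val * s.val / N)
      = c • ∑ t' : Fin M, ∑ s' : Fin N, Tq M N f t s u v t' s' := by
    intro u v
    rw [dqft, mul_smul_comm, smul_mul_assoc]
    congr 1
    simp only [Finset.mul_sum, Finset.sum_mul]
    refine Finset.sum_congr rfl fun t' _ => Finset.sum_congr rfl fun s' _ => ?_
    rw [Tq]
    noncomm_ring
  have h3 : ∀ t' : Fin M, ∀ s' : Fin N,
      ∑ u : Fin M, ∑ v : Fin N, Tq M N f t s u v t' s'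
        = (if t = t' then (M : Quaternion ℝ) else 0) * f t' s' *
            (if s = s' then (N : Quaternion ℝ) else 0) := by
    intro t' s'
    simp only [Tq]
    rw [sum_factor
      (fun u => qexp qI (2 * Real.pi * u.val * t.val / M) *
        qexp qI (-(2 * Real.pi * u.val * t'.val / M)))
      (fun v => qexp qJ (-(2 * Real.pi * v.val * s'.val / N)) *
        qexp qJ (2 * Real.pi * v.val * s.val / N))
      (f t' s'), qsum_I M hM t t', qsum_J N hN s s']
  have h4 : ∑ u : Fin M, ∑ v : Fin N,
        qexp qI (2 * Real.pi * u.val * t.val / M) * dqft M N f u v *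
          qexp qJ (2 * Real.pi * v.val * s.val / N)
      = c • ((M : Quaternion ℝ) * f t s * (N : Quaternion ℝ)) := by
    rw [Finset.sum_congr rfl fun u _ => Finset.sum_congr rfl fun v _ => h1 u v]
    simp only [← Finset.smul_sum]
    rw [quad_swap (Tq M N f t s),
      Finset.sum_congr rfl fun t' _ => Finset.sum_congr rfl fun s' _ => h3 t' s']
    congr 1
    simp only [ite_mul, mul_ite, zero_mul, mul_zero, Finset.sum_ite_eq,
      Finset.mem_univ, if_true]
  rw [h4, smul_smul]
  have hM0 : (0:ℝ) < (M : ℝ) := by exact_mod_cast hM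
  have hN0 : (0:ℝ) < (N : ℝ) := by exact_mod_cast hN
  have hcoe : (M : Quaternion ℝ) * f t s * (N : Quaternion ℝ)
      = (((M : ℝ) * (N : ℝ)) : ℝ) • f t s := by
    rw [show (M : Quaternion ℝ) = (((M:ℝ) : ℝ) : Quaternion ℝ) by push_cast; rfl,
      show (N : Quaternion ℝ) = (((N:ℝ) : ℝ) : Quaternion ℝ) by push_cast; rfl,
      Quaternion.coe_mul_eq_smul, Quaternion.mul_coe_eq_smul, smul_smul, mul_comm]
  rw [hcoe, smul_smul, hc]
  have hs : Real.sqrt ((M:ℝ) * (N:ℝ)) * Real.sqrt ((M:ℝ) * (N:ℝ)) = (M:ℝ) * (N:ℝ) :=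
    Real.mul_self_sqrt (by positivity)
  have hone : (Real.sqrt ((M:ℕ) * (N:ℕ) : ℝ))⁻¹ * (Real.sqrt ((M:ℕ) * (N:ℕ) : ℝ))⁻¹
      * ((M:ℝ) * (N:ℝ)) = 1 := by
    have hsp : (0:ℝ) < Real.sqrt ((M:ℝ) * (N:ℝ)) := Real.sqrt_pos.mpr (by positivity)
    rw [show ((M:ℕ) * (N:ℕ) : ℝ) = (M:ℝ) * (N:ℝ) by push_cast; ring]
    field_simp
    nlinarith [Real.mul_self_sqrt hM0.le, Real.mul_self_sqrt hN0.le]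
  rw [hone, one_smul]

/-- Discrete quaternion uncertainty principle: `N_{(t,s)} · N_{(u,v)} ≥ M·N`. -/
theorem dqft_uncertainty (M N : ℕ) (hM : 0 < M) (hN : 0 < N)
    (f : Fin M → Fin N → Quaternion ℝ) (hf : f ≠ 0) :
    M * N ≤
      (Finset.univ.filter (fun p : Fin M × Fin N => f p.1 p.2 ≠ 0)).card *
        (Finset.univ.filter (fun p : Fin M × Fin N => dqft M N f p.1 p.2 ≠ 0)).card := by
  classical
  set A := (Finset.univ.filter (fun p : Fin M × Fin N => f p.1 p.2 ≠ 0)) with hA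
  set B := (Finset.univ.filter (fun p : Fin M × Fin N => dqft M N f p.1 p.2 ≠ 0)) with hB
  set c : ℝ := (Real.sqrt ((M : ℝ) * (N : ℝ)))⁻¹ with hc
  have hMN0 : (0:ℝ) < (M:ℝ) * (N:ℝ) := by positivity
  have hsp : (0:ℝ) < Real.sqrt ((M:ℝ) * (N:ℝ)) := Real.sqrt_pos.mpr hMN0
  have hc0 : (0:ℝ) < c := by rw [hc]; positivity
  have hcc : c * c * ((M:ℝ) * (N:ℝ)) = 1 := by
    rw [hc]
    field_simp
    nlinarith [Real.mul_self_sqrt (show (0:ℝ) ≤ (M:ℝ) by positivity),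
      Real.mul_self_sqrt (show (0:ℝ) ≤ (N:ℝ) by positivity), Real.sq_sqrt hMN0.le]
  obtain ⟨p0, hp0⟩ : ∃ p : Fin M × Fin N, f p.1 p.2 ≠ 0 := by
    by_contra h
    push_neg at h
    exact hf (funext fun t => funext fun s => h (t, s))
  obtain ⟨P, -, hPmax⟩ := Finset.exists_max_image (Finset.univ : Finset (Fin M × Fin N))
    (fun p => ‖f p.1 p.2‖) ⟨p0, Finset.mem_univ _⟩
  set m := ‖f P.1 P.2‖ with hm
  have hm0 : 0 < m := lt_of_lt_of_le (norm_pos_iff.mpr hp0) (hPmax p0 (Finset.mem_univ _))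
  obtain ⟨Q, -, hQmax⟩ := Finset.exists_max_image (Finset.univ : Finset (Fin M × Fin N))
    (fun p => ‖dqft M N f p.1 p.2‖) ⟨p0, Finset.mem_univ _⟩
  set mh := ‖dqft M N f Q.1 Q.2‖ with hmh
  -- Bound I : every DQFT value is bounded by c * |A| * m
  have boundI : ∀ (u : Fin M) (v : Fin N), ‖dqft M N f u v‖ ≤ c * ((A.card : ℝ) * m) := by
    intro u v
    rw [dqft, norm_smul, Real.norm_eq_abs, abs_of_nonneg (by positivity)]
    refine mul_le_mul_of_nonneg_left ?_ (by positivity)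
    calc ‖∑ t : Fin M, ∑ s : Fin N,
          qexp qI (-(2 * Real.pi * u.val * t.val / M)) * f t s *
            qexp qJ (-(2 * Real.pi * v.val * s.val / N))‖
        ≤ ∑ t : Fin M, ∑ s : Fin N, ‖qexp qI (-(2 * Real.pi * u.val * t.val / M)) * f t s *
            qexp qJ (-(2 * Real.pi * v.val * s.val / N))‖ :=
          (norm_sum_le _ _).trans (Finset.sum_le_sum fun t _ => norm_sum_le _ _)
      _ = ∑ t : Fin M, ∑ s : Fin N, ‖f t s‖ := by
          refine Finset.sum_congr rfl fun t _ => Finset.sum_congr rfl fun s _ => ?_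
          rw [norm_mul, norm_mul, norm_qexp_qI, norm_qexp_qJ, one_mul, mul_one]
      _ = ∑ p : Fin M × Fin N, ‖f p.1 p.2‖ := by rw [Fintype.sum_prod_type]
      _ = ∑ p ∈ A, ‖f p.1 p.2‖ := by
          refine (Finset.sum_subset (Finset.subset_univ A) fun p _ hpA => ?_).symm
          rw [hA, Finset.mem_filter] at hpA
          push_neg at hpA
          rw [hpA (Finset.mem_univ _), norm_zero]
      _ ≤ (A.card : ℝ) * m := by
          have := Finset.sum_le_card_nsmul A (fun p => ‖f p.1 p.2‖) m
            (fun p _ => hPmax p (Finset.mem_univ _))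
          simpa [nsmul_eq_mul] using this
  -- Bound II : m is bounded by c * |B| * mh, via the inversion formula
  have boundII : m ≤ c * ((B.card : ℝ) * mh) := by
    conv_lhs => rw [hm, ← dqft_inv M N hM hN f P.1 P.2]
    rw [norm_smul, Real.norm_eq_abs, abs_of_nonneg (by positivity)]
    have hceq : ‖(Real.sqrt ((M:ℕ) * (N:ℕ) : ℝ))⁻¹‖ = c := by
      rw [Real.norm_eq_abs, abs_of_nonneg (by positivity), hc]
    refine le_trans (mul_le_mul_of_nonneg_left ?_ hc0.le) (le_of_eq rfl)
    calc ‖∑ u : Fin M, ∑ v : Fin N,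
          qexp qI (2 * Real.pi * u.val * P.1.val / M) * dqft M N f u v *
            qexp qJ (2 * Real.pi * v.val * P.2.val / N)‖
        ≤ ∑ u : Fin M, ∑ v : Fin N, ‖qexp qI (2 * Real.pi * u.val * P.1.val / M) *
            dqft M N f u v * qexp qJ (2 * Real.pi * v.val * P.2.val / N)‖ :=
          (norm_sum_le _ _).trans (Finset.sum_le_sum fun u _ => norm_sum_le _ _)
      _ = ∑ u : Fin M, ∑ v : Fin N, ‖dqft M N f u v‖ := by
          refine Finset.sum_congr rfl fun u _ => Finset.sum_congr rfl fun v _ => ?_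
          rw [norm_mul, norm_mul, norm_qexp_qI, norm_qexp_qJ, one_mul, mul_one]
      _ = ∑ p : Fin M × Fin N, ‖dqft M N f p.1 p.2‖ := by rw [Fintype.sum_prod_type]
      _ = ∑ p ∈ B, ‖dqft M N f p.1 p.2‖ := by
          refine (Finset.sum_subset (Finset.subset_univ B) fun p _ hpB => ?_).symm
          rw [hB, Finset.mem_filter] at hpB
          push_neg at hpB
          rw [hpB (Finset.mem_univ _), norm_zero]
      _ ≤ (B.card : ℝ) * mh := by
          have := Finset.sum_le_card_nsmul B (fun p => ‖dqft M N f p.1 p.2‖) mh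
            (fun p _ => hQmax p (Finset.mem_univ _))
          simpa [nsmul_eq_mul] using this
  have hmhB : mh ≤ c * ((A.card : ℝ) * m) := boundI Q.1 Q.2
  have hmain : m ≤ c * c * ((A.card : ℝ) * (B.card : ℝ)) * m := by
    calc m ≤ c * ((B.card : ℝ) * mh) := boundII
      _ ≤ c * ((B.card : ℝ) * (c * ((A.card : ℝ) * m))) := by
          refine mul_le_mul_of_nonneg_left ?_ hc0.le
          exact mul_le_mul_of_nonneg_left hmhB (by positivity)
      _ = c * c * ((A.card : ℝ) * (B.card : ℝ)) * m := by ring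
  have hreal : (M:ℝ) * (N:ℝ) ≤ (A.card : ℝ) * (B.card : ℝ) := by
    have h5 : (M:ℝ) * (N:ℝ) * m ≤ (A.card : ℝ) * (B.card : ℝ) * m := by
      have := mul_le_mul_of_nonneg_left hmain hMN0.le
      calc (M:ℝ) * (N:ℝ) * m ≤ (M:ℝ) * (N:ℝ) * (c * c * ((A.card : ℝ) * (B.card : ℝ)) * m) :=
            this
        _ = (c * c * ((M:ℝ) * (N:ℝ))) * ((A.card : ℝ) * (B.card : ℝ)) * m := by ring
        _ = (A.card : ℝ) * (B.card : ℝ) * m := by rw [hcc]; ring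
    exact le_of_mul_le_mul_right h5 hm0
  exact_mod_cast hreal
end

section
/- Let N be a positive integer and let f:{0,…,N−1}×{0,…,N−1}→ℍ be a discrete quaternion signal (square case M=N) that is not identically zero. Then N_{(t,s)} · N_{(u,v)} ≥ N², where N_{(t,s)} is the number of nonzero values of f and N_{(u,v)} is the number of nonzero values of its DQFT f̂. -/
open scoped BigOperators Classical

set_option maxHeartbeats 1000000

lemma qexpI_mul (a b : ℝ) : qexp qI a * qexp qI b = qexp qI (a+b) := by
  ext <;> simp [qexp, Real.cos_add, Real.sin_add] <;> simp [qI] <;> ring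

lemma qexpJ_mul (a b : ℝ) : qexp qJ a * qexp qJ b = qexp qJ (a+b) := by
  ext <;> simp [qexp, Real.cos_add, Real.sin_add] <;> simp [qJ] <;> ring

lemma norm_qexpI (a : ℝ) : ‖qexp qI a‖ = 1 := by
  have h : ‖qexp qI a‖ * ‖qexp qI a‖ = 1 := by
    rw [← Quaternion.normSq_eq_norm_mul_self]
    simp [Quaternion.normSq_def', qexp] <;> simp [qI]
  nlinarith [norm_nonneg (qexp qI a)]

lemma norm_qexpJ (a : ℝ) : ‖qexp qJ a‖ = 1 := by
  have h : ‖qexp qJ a‖ * ‖qexp qJ a‖ = 1 := by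
    rw [← Quaternion.normSq_eq_norm_mul_self]
    simp [Quaternion.normSq_def', qexp] <;> simp [qJ]
  nlinarith [norm_nonneg (qexp qJ a)]

noncomputable def phiI : ℂ →+ Quaternion ℝ where
  toFun z := ⟨z.re, z.im, 0, 0⟩
  map_zero' := by ext <;> rfl
  map_add' x y := by ext <;> change _ = _ + _ <;> simp

lemma phiI_apply (z : ℂ) : phiI z = ⟨z.re, z.im, 0, 0⟩ := rfl

noncomputable def phiJ : ℂ →+ Quaternion ℝ where
  toFun z := ⟨z.re, 0, z.im, 0⟩
  map_zero' := by ext <;> rfl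
  map_add' x y := by ext <;> change _ = _ + _ <;> simp

lemma phiJ_apply (z : ℂ) : phiJ z = ⟨z.re, 0, z.im, 0⟩ := rfl

lemma phiI_exp (θ : ℝ) : phiI (Complex.exp (θ * Complex.I)) = qexp qI θ := by
  ext <;> simp [phiI_apply, qexp, Complex.exp_mul_I, Complex.cos_ofReal_re, Complex.sin_ofReal_re] <;> simp [qI]

lemma phiJ_exp (θ : ℝ) : phiJ (Complex.exp (θ * Complex.I)) = qexp qJ θ := by
  ext <;> simp [phiJ_apply, qexp, Complex.exp_mul_I, Complex.cos_ofReal_re, Complex.sin_ofReal_re] <;> simp [qJ]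

lemma phiI_nat (n : ℕ) : phiI (n : ℂ) = ((n:ℝ) : Quaternion ℝ) := by
  ext <;> simp [phiI_apply]

lemma phiJ_nat (n : ℕ) : phiJ (n : ℂ) = ((n:ℝ) : Quaternion ℝ) := by
  ext <;> simp [phiJ_apply]

lemma csum (N : ℕ) (hN : 0 < N) (t t' : Fin N) :
    ∑ u : Fin N, Complex.exp ((2*Real.pi*(u.val:ℝ)*(t.val:ℝ)/N + -(2*Real.pi*(u.val:ℝ)*(t'.val:ℝ)/N) : ℝ) * Complex.I)
      = if t = t' then (N:ℂ) else 0 := by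
  by_cases h : t = t'
  · simp [h]
  · simp only [if_neg h]
    set m : ℤ := (t.val : ℤ) - (t'.val : ℤ) with hm
    set ζ : ℂ := Complex.exp (2*Real.pi*(m:ℝ)/N * Complex.I) with hζ
    have hterm : ∀ u : Fin N,
        Complex.exp ((2*Real.pi*(u.val:ℝ)*(t.val:ℝ)/N + -(2*Real.pi*(u.val:ℝ)*(t'.val:ℝ)/N) : ℝ) * Complex.I) = ζ ^ (u.val) := by
      intro u
      rw [hζ, ← Complex.exp_nat_mul]
      congr 1
      push_cast [hm]
      ring
    have hN0 : (N:ℂ) ≠ 0 := Nat.cast_ne_zero.2 hN.ne'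
    have hζN : ζ ^ N = 1 := by
      rw [hζ, ← Complex.exp_nat_mul]
      rw [Complex.exp_eq_one_iff]
      refine ⟨m, ?_⟩
      push_cast
      field_simp
    have hζ1 : ζ ≠ 1 := by
      intro h1
      rw [hζ, Complex.exp_eq_one_iff] at h1
      obtain ⟨n, hn⟩ := h1
      have hπ : (Real.pi : ℂ) ≠ 0 := by exact_mod_cast Real.pi_ne_zero
      have h2 : (m : ℂ) * (2*(Real.pi:ℂ)*Complex.I) = ((n*N : ℤ) : ℂ) * (2*(Real.pi:ℂ)*Complex.I) := by
        push_cast at hn ⊢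
        field_simp at hn
        linear_combination (2*(Real.pi:ℂ)*Complex.I) * hn
      have h3 : (m : ℂ) = ((n*N : ℤ) : ℂ) :=
        mul_right_cancel₀ (by simp [Complex.I_ne_zero, hπ, Real.pi_ne_zero]) h2
      have hmn : m = n * N := by exact_mod_cast h3
      have hm0 : m ≠ 0 := by
        intro hh
        apply h
        have h4 : (t.val : ℤ) - (t'.val : ℤ) = 0 := hm ▸ hh
        have h5 : t.val = t'.val := by omega
        exact Fin.ext h5
      have habs : |m| < (N:ℤ) := by
        have h6 := t.isLt; have h7 := t'.isLt
        rw [hm, abs_sub_lt_iff]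
        constructor <;> [skip; skip] <;> push_cast <;> omega
      rcases eq_or_ne n 0 with h0 | h0
      · exact hm0 (by simp [hmn, h0])
      · have hge : (N:ℤ) ≤ |m| := by
          rw [hmn, abs_mul, abs_of_nonneg (show (0:ℤ) ≤ (N:ℤ) by positivity)]
          have h1 : 1 ≤ |n| := Int.one_le_abs h0
          nlinarith
        linarith
    calc (∑ u : Fin N, Complex.exp ((2*Real.pi*(u.val:ℝ)*(t.val:ℝ)/N + -(2*Real.pi*(u.val:ℝ)*(t'.val:ℝ)/N) : ℝ) * Complex.I))
        = ∑ u : Fin N, ζ ^ (u.val) := Finset.sum_congr rfl fun u _ => hterm u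
      _ = ∑ i ∈ Finset.range N, ζ ^ i := Fin.sum_univ_eq_sum_range _ _
      _ = (ζ ^ N - 1) / (ζ - 1) := geom_sum_eq hζ1 N
      _ = 0 := by rw [hζN]; simp

lemma sumI (N : ℕ) (hN : 0 < N) (t t' : Fin N) :
    ∑ u : Fin N, qexp qI (2*Real.pi*(u.val:ℝ)*(t.val:ℝ)/N + -(2*Real.pi*(u.val:ℝ)*(t'.val:ℝ)/N))
      = if t = t' then (((N:ℝ)) : Quaternion ℝ) else 0 := by
  have := csum N hN t t'
  calc ∑ u : Fin N, qexp qI (2*Real.pi*(u.val:ℝ)*(t.val:ℝ)/N + -(2*Real.pi*(u.val:ℝ)*(t'.val:ℝ)/N))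
      = ∑ u : Fin N, phiI (Complex.exp ((2*Real.pi*(u.val:ℝ)*(t.val:ℝ)/N + -(2*Real.pi*(u.val:ℝ)*(t'.val:ℝ)/N) : ℝ) * Complex.I)) := by
        exact Finset.sum_congr rfl fun u _ => (phiI_exp _).symm
    _ = phiI (∑ u : Fin N, Complex.exp ((2*Real.pi*(u.val:ℝ)*(t.val:ℝ)/N + -(2*Real.pi*(u.val:ℝ)*(t'.val:ℝ)/N) : ℝ) * Complex.I)) := (map_sum phiI _ _).symm
    _ = phiI (if t = t' then (N:ℂ) else 0) := by rw [this]
    _ = if t = t' then (((N:ℝ)) : Quaternion ℝ) else 0 := by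
        split <;> simp [phiI_nat]

lemma sumJ (N : ℕ) (hN : 0 < N) (t t' : Fin N) :
    ∑ u : Fin N, qexp qJ (2*Real.pi*(u.val:ℝ)*(t.val:ℝ)/N + -(2*Real.pi*(u.val:ℝ)*(t'.val:ℝ)/N))
      = if t = t' then (((N:ℝ)) : Quaternion ℝ) else 0 := by
  have := csum N hN t t'
  calc ∑ u : Fin N, qexp qJ (2*Real.pi*(u.val:ℝ)*(t.val:ℝ)/N + -(2*Real.pi*(u.val:ℝ)*(t'.val:ℝ)/N))
      = ∑ u : Fin N, phiJ (Complex.exp ((2*Real.pi*(u.val:ℝ)*(t.val:ℝ)/N + -(2*Real.pi*(u.val:ℝ)*(t'.val:ℝ)/N) : ℝ) * Complex.I)) := by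
        exact Finset.sum_congr rfl fun u _ => (phiJ_exp _).symm
    _ = phiJ (∑ u : Fin N, Complex.exp ((2*Real.pi*(u.val:ℝ)*(t.val:ℝ)/N + -(2*Real.pi*(u.val:ℝ)*(t'.val:ℝ)/N) : ℝ) * Complex.I)) := (map_sum phiJ _ _).symm
    _ = phiJ (if t = t' then (N:ℂ) else 0) := by rw [this]
    _ = if t = t' then (((N:ℝ)) : Quaternion ℝ) else 0 := by
        split <;> simp [phiJ_nat]

lemma rearr (A E1 x E2 B : Quaternion ℝ) :
    A * (E1 * x * E2) * B = (A*E1) * x * (E2*B) := by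
  simp only [mul_assoc]

lemma factor (N : ℕ) (A B : Fin N → Fin N → Quaternion ℝ)
    (x : Fin N → Fin N → Quaternion ℝ) :
    ∑ u : Fin N, ∑ v : Fin N, ∑ t' : Fin N, ∑ s' : Fin N, A u t' * x t' s' * B v s'
    = ∑ t' : Fin N, ∑ s' : Fin N,
        (∑ u : Fin N, A u t') * x t' s' * (∑ v : Fin N, B v s') := by
  calc ∑ u : Fin N, ∑ v : Fin N, ∑ t' : Fin N, ∑ s' : Fin N, A u t' * x t' s' * B v s'
      = ∑ u : Fin N, ∑ t' : Fin N, ∑ s' : Fin N, A u t' * x t' s' * (∑ v : Fin N, B v s') := by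
        refine Finset.sum_congr rfl fun u _ => ?_
        rw [Finset.sum_comm]
        refine Finset.sum_congr rfl fun t' _ => ?_
        rw [Finset.sum_comm]
        refine Finset.sum_congr rfl fun s' _ => ?_
        rw [← Finset.mul_sum]
    _ = ∑ t' : Fin N, ∑ s' : Fin N,
        (∑ u : Fin N, A u t') * x t' s' * (∑ v : Fin N, B v s') := by
        rw [Finset.sum_comm]
        refine Finset.sum_congr rfl fun t' _ => ?_
        rw [Finset.sum_comm]
        refine Finset.sum_congr rfl fun s' _ => ?_
        rw [← Finset.sum_mul, ← Finset.sum_mul]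

lemma inversion (N : ℕ) (hN : 0 < N) (f : Fin N → Fin N → Quaternion ℝ) (t s : Fin N) :
    ∑ u : Fin N, ∑ v : Fin N,
      qexp qI (2*Real.pi*(u.val:ℝ)*(t.val:ℝ)/N) * dqft N N f u v *
        qexp qJ (2*Real.pi*(v.val:ℝ)*(s.val:ℝ)/N)
    = (N:ℝ) • f t s := by
  have hN0 : (N:ℝ) ≠ 0 := Nat.cast_ne_zero.2 hN.ne'
  have hsq : Real.sqrt ((N:ℝ) * (N:ℝ)) = (N:ℝ) := Real.sqrt_mul_self (Nat.cast_nonneg N)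
  calc ∑ u : Fin N, ∑ v : Fin N,
      qexp qI (2*Real.pi*(u.val:ℝ)*(t.val:ℝ)/N) * dqft N N f u v *
        qexp qJ (2*Real.pi*(v.val:ℝ)*(s.val:ℝ)/N)
      = ((N:ℝ)⁻¹) • ∑ u : Fin N, ∑ v : Fin N,
          qexp qI (2*Real.pi*(u.val:ℝ)*(t.val:ℝ)/N) *
          (∑ t' : Fin N, ∑ s' : Fin N,
            qexp qI (-(2 * Real.pi * u.val * t'.val / N)) * f t' s' *
              qexp qJ (-(2 * Real.pi * v.val * s'.val / N))) *
          qexp qJ (2*Real.pi*(v.val:ℝ)*(s.val:ℝ)/N) := by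
        rw [Finset.smul_sum]
        refine Finset.sum_congr rfl fun u _ => ?_
        rw [Finset.smul_sum]
        refine Finset.sum_congr rfl fun v _ => ?_
        rw [dqft, hsq, mul_smul_comm, smul_mul_assoc]
    _ = ((N:ℝ)⁻¹) • ∑ u : Fin N, ∑ v : Fin N, ∑ t' : Fin N, ∑ s' : Fin N,
          qexp qI (2*Real.pi*(u.val:ℝ)*(t.val:ℝ)/N + -(2 * Real.pi * u.val * t'.val / N)) *
            f t' s' *
          qexp qJ (2*Real.pi*(v.val:ℝ)*(s.val:ℝ)/N + -(2 * Real.pi * v.val * s'.val / N)) := by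
        congr 1
        refine Finset.sum_congr rfl fun u _ => Finset.sum_congr rfl fun v _ => ?_
        rw [Finset.mul_sum, Finset.sum_mul]
        refine Finset.sum_congr rfl fun t' _ => ?_
        rw [Finset.mul_sum, Finset.sum_mul]
        refine Finset.sum_congr rfl fun s' _ => ?_
        rw [rearr, qexpI_mul, qexpJ_mul, add_comm (-(2 * Real.pi * v.val * s'.val / N))]
    _ = ((N:ℝ)⁻¹) • ∑ t' : Fin N, ∑ s' : Fin N,
          (if t = t' then (((N:ℝ)) : Quaternion ℝ) else 0) * f t' s' *
          (if s = s' then (((N:ℝ)) : Quaternion ℝ) else 0) := by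
        rw [factor N
          (fun u t' => qexp qI (2*Real.pi*(u.val:ℝ)*(t.val:ℝ)/N + -(2 * Real.pi * u.val * t'.val / N)))
          (fun v s' => qexp qJ (2*Real.pi*(v.val:ℝ)*(s.val:ℝ)/N + -(2 * Real.pi * v.val * s'.val / N))) f]
        congr 1
        refine Finset.sum_congr rfl fun t' _ => Finset.sum_congr rfl fun s' _ => ?_
        rw [sumI N hN t t', sumJ N hN s s']
    _ = (N:ℝ) • f t s := by
        simp only [ite_mul, mul_ite, zero_mul, mul_zero, Finset.sum_ite_eq, Finset.mem_univ,
          if_true]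
        rw [Quaternion.coe_mul_eq_smul, smul_mul_assoc, Quaternion.mul_coe_eq_smul,
          smul_smul, smul_smul]
        congr 1
        field_simp

/-- Square case `M = N`: `N_{(t,s)} · N_{(u,v)} ≥ N²`. -/
theorem dqft_uncertainty_square (N : ℕ) (hN : 0 < N)
    (f : Fin N → Fin N → Quaternion ℝ) (hf : f ≠ 0) :
    N ^ 2 ≤
      (Finset.univ.filter (fun p : Fin N × Fin N => f p.1 p.2 ≠ 0)).card *
        (Finset.univ.filter (fun p : Fin N × Fin N => dqft N N f p.1 p.2 ≠ 0)).card := by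
  haveI : NeZero N := ⟨hN.ne'⟩
  set A := Finset.univ.filter (fun p : Fin N × Fin N => f p.1 p.2 ≠ 0) with hA
  set B := Finset.univ.filter (fun p : Fin N × Fin N => dqft N N f p.1 p.2 ≠ 0) with hB
  have hN0 : (N:ℝ) ≠ 0 := Nat.cast_ne_zero.2 hN.ne'
  have hsq : Real.sqrt ((N:ℝ) * (N:ℝ)) = (N:ℝ) := Real.sqrt_mul_self (Nat.cast_nonneg N)
  obtain ⟨p₀, -, hp₀⟩ := Finset.exists_max_image (Finset.univ : Finset (Fin N × Fin N))
    (fun p => ‖f p.1 p.2‖) Finset.univ_nonempty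
  obtain ⟨p₁, -, hp₁⟩ := Finset.exists_max_image (Finset.univ : Finset (Fin N × Fin N))
    (fun p => ‖dqft N N f p.1 p.2‖) Finset.univ_nonempty
  set Mf := ‖f p₀.1 p₀.2‖ with hMf
  set Mg := ‖dqft N N f p₁.1 p₁.2‖ with hMg
  have hMfpos : 0 < Mf := by
    obtain ⟨t, ht⟩ := Function.ne_iff.1 hf
    obtain ⟨s, hs⟩ := Function.ne_iff.1 ht
    have h1 : 0 < ‖f t s‖ := norm_pos_iff.2 hs
    exact lt_of_lt_of_le h1 (hp₀ (t, s) (Finset.mem_univ _))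
  have hMgnn : 0 ≤ Mg := norm_nonneg _
  -- Bound 1 : for every (u,v), ‖dqft f u v‖ ≤ N⁻¹ * (A.card * Mf)
  have bound1 : ∀ u v : Fin N, ‖dqft N N f u v‖ ≤ (N:ℝ)⁻¹ * (A.card * Mf) := by
    intro u v
    rw [dqft, norm_smul, hsq]
    have h2 : ‖∑ t : Fin N, ∑ s : Fin N,
        qexp qI (-(2 * Real.pi * u.val * t.val / N)) * f t s *
          qexp qJ (-(2 * Real.pi * v.val * s.val / N))‖ ≤ A.card * Mf := by
      calc ‖∑ t : Fin N, ∑ s : Fin N,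
            qexp qI (-(2 * Real.pi * u.val * t.val / N)) * f t s *
              qexp qJ (-(2 * Real.pi * v.val * s.val / N))‖
          ≤ ∑ t : Fin N, ∑ s : Fin N, ‖qexp qI (-(2 * Real.pi * u.val * t.val / N)) * f t s *
              qexp qJ (-(2 * Real.pi * v.val * s.val / N))‖ := by
            refine (norm_sum_le _ _).trans (Finset.sum_le_sum fun t _ => norm_sum_le _ _)
        _ = ∑ t : Fin N, ∑ s : Fin N, ‖f t s‖ := by
            refine Finset.sum_congr rfl fun t _ => Finset.sum_congr rfl fun s _ => ?_
            rw [norm_mul, norm_mul, norm_qexpI, norm_qexpJ, one_mul, mul_one]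
        _ = ∑ p : Fin N × Fin N, ‖f p.1 p.2‖ :=
            (Fintype.sum_prod_type (f := fun p : Fin N × Fin N => ‖f p.1 p.2‖)).symm
        _ = ∑ p ∈ A, ‖f p.1 p.2‖ := by
            rw [hA]
            rw [Finset.sum_filter_of_ne]
            intro p _ hne
            exact fun h0 => hne (by rw [h0, norm_zero])
        _ ≤ ∑ p ∈ A, Mf := Finset.sum_le_sum fun p _ => hp₀ p (Finset.mem_univ _)
        _ = A.card * Mf := by rw [Finset.sum_const, nsmul_eq_mul]
    rw [Real.norm_eq_abs, abs_of_nonneg (by positivity)]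
    exact mul_le_mul_of_nonneg_left h2 (by positivity)
  -- consequence: N * Mg ≤ A.card * Mf
  have key1 : (N:ℝ) * Mg ≤ A.card * Mf := by
    have := bound1 p₁.1 p₁.2
    rw [← hMg] at this
    calc (N:ℝ) * Mg ≤ (N:ℝ) * ((N:ℝ)⁻¹ * (A.card * Mf)) :=
          mul_le_mul_of_nonneg_left this (by positivity)
      _ = A.card * Mf := by field_simp
  -- Bound 2 : N * Mf ≤ B.card * Mg
  have key2 : (N:ℝ) * Mf ≤ B.card * Mg := by
    have hinv := inversion N hN f p₀.1 p₀.2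
    have : (N:ℝ) * Mf = ‖∑ u : Fin N, ∑ v : Fin N,
        qexp qI (2*Real.pi*(u.val:ℝ)*(p₀.1.val:ℝ)/N) * dqft N N f u v *
          qexp qJ (2*Real.pi*(v.val:ℝ)*(p₀.2.val:ℝ)/N)‖ := by
      rw [hinv, norm_smul, Real.norm_eq_abs, abs_of_nonneg (Nat.cast_nonneg N), hMf]
    rw [this]
    calc ‖∑ u : Fin N, ∑ v : Fin N,
          qexp qI (2*Real.pi*(u.val:ℝ)*(p₀.1.val:ℝ)/N) * dqft N N f u v *
            qexp qJ (2*Real.pi*(v.val:ℝ)*(p₀.2.val:ℝ)/N)‖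
        ≤ ∑ u : Fin N, ∑ v : Fin N, ‖qexp qI (2*Real.pi*(u.val:ℝ)*(p₀.1.val:ℝ)/N) * dqft N N f u v *
            qexp qJ (2*Real.pi*(v.val:ℝ)*(p₀.2.val:ℝ)/N)‖ :=
          (norm_sum_le _ _).trans (Finset.sum_le_sum fun u _ => norm_sum_le _ _)
      _ = ∑ u : Fin N, ∑ v : Fin N, ‖dqft N N f u v‖ := by
          refine Finset.sum_congr rfl fun u _ => Finset.sum_congr rfl fun v _ => ?_
          rw [norm_mul, norm_mul, norm_qexpI, norm_qexpJ, one_mul, mul_one]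
      _ = ∑ p : Fin N × Fin N, ‖dqft N N f p.1 p.2‖ :=
          (Fintype.sum_prod_type (f := fun p : Fin N × Fin N => ‖dqft N N f p.1 p.2‖)).symm
      _ = ∑ p ∈ B, ‖dqft N N f p.1 p.2‖ := by
          rw [hB]
          rw [Finset.sum_filter_of_ne]
          intro p _ hne
          exact fun h0 => hne (by rw [h0, norm_zero])
      _ ≤ ∑ p ∈ B, Mg := Finset.sum_le_sum fun p _ => hp₁ p (Finset.mem_univ _)
      _ = B.card * Mg := by rw [Finset.sum_const, nsmul_eq_mul]
  -- combine
  have hreal : ((N:ℝ)) ^ 2 ≤ (A.card : ℝ) * B.card := by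
    have hNnn : (0:ℝ) ≤ (N:ℝ) := Nat.cast_nonneg N
    have hBnn : (0:ℝ) ≤ (B.card : ℝ) := Nat.cast_nonneg _
    have h3 : (N:ℝ) * ((N:ℝ) * Mf) ≤ (N:ℝ) * (B.card * Mg) :=
      mul_le_mul_of_nonneg_left key2 hNnn
    have h4 : (B.card:ℝ) * ((N:ℝ) * Mg) ≤ (B.card:ℝ) * (A.card * Mf) :=
      mul_le_mul_of_nonneg_left key1 hBnn
    nlinarith [hMfpos]
  have := hreal
  push_cast at this
  exact_mod_cast this
end

section
/- Let M,N be positive integers and let f:{0,…,M−1}×{0,…,N−1}→ℍ be a discrete quaternion signal with DQFT f̂. Then the DQFT preserves the ℓ² energy: ∑_{u=0}^{M−1}∑_{v=0}^{N−1} |f̂(u,v)|² = ∑_{t=0}^{M−1}∑_{s=0}^{N−1} |f(t,s)|², where |q| denotes the quaternion modulus. -/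
open scoped BigOperators Classical

/-! ### Auxiliary machinery -/

noncomputable def toQ (q : Quaternion ℝ) (z : ℂ) : Quaternion ℝ :=
  ((z.re : ℝ) : Quaternion ℝ) + z.im • q

lemma star_qI : star qI = -qI := by
  ext <;> simp only [Quaternion.re_star, Quaternion.imI_star, Quaternion.imJ_star, Quaternion.imK_star,
    Quaternion.re_neg, Quaternion.imI_neg, Quaternion.imJ_neg, Quaternion.imK_neg] <;> simp [qI]

lemma star_qJ : star qJ = -qJ := by
  ext <;> simp only [Quaternion.re_star, Quaternion.imI_star, Quaternion.imJ_star, Quaternion.imK_star,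
    Quaternion.re_neg, Quaternion.imI_neg, Quaternion.imJ_neg, Quaternion.imK_neg] <;> simp [qJ]

lemma coeQ_sum {ι : Type*} (s : Finset ι) (r : ι → ℝ) :
    ((∑ i ∈ s, r i : ℝ) : Quaternion ℝ) = ∑ i ∈ s, (r i : Quaternion ℝ) := by
  rw [← Quaternion.algebraMap_def]
  exact map_sum (algebraMap ℝ (Quaternion ℝ)) r s

lemma toQ_mul {q : Quaternion ℝ} (hq : q * q = -1) (z w : ℂ) :
    toQ q (z * w) = toQ q z * toQ q w := by
  have h : ∀ r : ℝ, (r : Quaternion ℝ) = r • (1 : Quaternion ℝ) := fun r => by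
    rw [← Quaternion.coe_mul_eq_smul, mul_one]
  simp only [toQ, Complex.mul_re, Complex.mul_im]
  rw [h (z.re * w.re - z.im * w.im), h z.re, h w.re]
  simp only [add_mul, mul_add, smul_mul_smul_comm, hq, smul_neg, smul_smul, one_mul, mul_one]
  module

lemma toQ_sum {q : Quaternion ℝ} {ι : Type*} (s : Finset ι) (g : ι → ℂ) :
    toQ q (∑ i ∈ s, g i) = ∑ i ∈ s, toQ q (g i) := by
  simp only [toQ, Complex.re_sum, Complex.im_sum, Finset.sum_smul, coeQ_sum,
    Finset.sum_add_distrib]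

lemma toQ_natCast {q : Quaternion ℝ} (n : ℕ) : toQ q (n : ℂ) = (n : Quaternion ℝ) := by
  simp only [toQ, Complex.natCast_re, Complex.natCast_im, zero_smul, add_zero]
  exact_mod_cast rfl

lemma qexp_toQ {q : Quaternion ℝ} (θ : ℝ) :
    qexp q θ = toQ q (Complex.exp (θ * Complex.I)) := by
  simp [qexp, toQ, Complex.exp_ofReal_mul_I_re, Complex.exp_ofReal_mul_I_im]

lemma qexp_zero {q : Quaternion ℝ} : qexp q 0 = 1 := by simp [qexp]

lemma qexp_mul {q : Quaternion ℝ} (hq : q * q = -1) (θ φ : ℝ) :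
    qexp q θ * qexp q φ = qexp q (θ + φ) := by
  rw [qexp_toQ, qexp_toQ, qexp_toQ, ← toQ_mul hq, ← Complex.exp_add]
  congr 2
  push_cast
  ring

lemma star_qexp {q : Quaternion ℝ} (hsq : star q = -q) (θ : ℝ) :
    star (qexp q θ) = qexp q (-θ) := by
  simp [qexp, star_add, star_smul, hsq, Real.cos_neg, Real.sin_neg, smul_neg, neg_smul]

lemma re_sum {ι : Type*} (s : Finset ι) (g : ι → Quaternion ℝ) :
    (∑ i ∈ s, g i).re = ∑ i ∈ s, (g i).re := by
  classical
  induction s using Finset.induction_on with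
  | empty => simp; rfl
  | insert _ _ h ih => simp [Finset.sum_insert h, ih]

lemma re_mul_comm (a b : Quaternion ℝ) : (a * b).re = (b * a).re := by
  simp only [Quaternion.re_mul]
  ring

lemma coe_mul_re (r : ℝ) (a : Quaternion ℝ) : ((r : Quaternion ℝ) * a).re = r * a.re := by
  simp [Quaternion.re_mul]

lemma sum_qexp (q : Quaternion ℝ) (M : ℕ) (hM : 0 < M) (k : ℤ) :
    ∑ u : Fin M, qexp q (2 * Real.pi * (k * u) / M) =
      if (M : ℤ) ∣ k then (M : Quaternion ℝ) else 0 := by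
  have hM' : (M : ℝ) ≠ 0 := Nat.cast_ne_zero.mpr hM.ne'
  have hMc : (M : ℂ) ≠ 0 := Nat.cast_ne_zero.mpr hM.ne'
  set ζ : ℂ := Complex.exp ((2 * Real.pi * k / M : ℝ) * Complex.I) with hζ
  have key : ∀ u : Fin M, qexp q (2 * Real.pi * (k * u) / M) = toQ q (ζ ^ (u : ℕ)) := by
    intro u
    rw [qexp_toQ, hζ, ← Complex.exp_nat_mul]
    congr 1
    push_cast
    field_simp [hMc]
  simp only [key]
  rw [← toQ_sum, Fin.sum_univ_eq_sum_range (fun i => ζ ^ i) M]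
  by_cases hd : (M : ℤ) ∣ k
  · rw [if_pos hd]
    obtain ⟨n, rfl⟩ := hd
    have hζ1 : ζ = 1 := by
      rw [hζ]
      have : ((2 * Real.pi * (M * n : ℤ) / M : ℝ) : ℂ) * Complex.I =
          (n : ℤ) * (2 * Real.pi * Complex.I) := by
        push_cast
        field_simp [hMc]
      rw [this, Complex.exp_int_mul_two_pi_mul_I]
    simp only [hζ1, one_pow, Finset.sum_const, Finset.card_range, nsmul_eq_mul, mul_one]
    rw [toQ_natCast]
  · rw [if_neg hd]
    have hζ1 : ζ ≠ 1 := by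
      intro h
      rw [hζ, Complex.exp_eq_one_iff] at h
      obtain ⟨n, hn⟩ := h
      apply hd
      refine ⟨n, ?_⟩
      have h3 : (2 * Real.pi * k / M : ℝ) = n * (2 * Real.pi) := by
        have := congrArg Complex.im hn
        simpa using this
      have h2π : (2 * Real.pi) ≠ 0 := by positivity
      have h4 : 2 * Real.pi * ((k : ℝ) / M) = 2 * Real.pi * (n : ℝ) := by
        linear_combination h3
      have h5 : (k : ℝ) / M = (n : ℝ) := mul_left_cancel₀ h2π h4
      have h6 : (k : ℝ) = (M : ℝ) * n := by
        field_simp at h5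
        linarith
      exact_mod_cast h6
    have hζM : ζ ^ M = 1 := by
      rw [hζ, ← Complex.exp_nat_mul]
      have : (M : ℂ) * (((2 * Real.pi * k / M : ℝ)) * Complex.I) =
          (k : ℤ) * (2 * Real.pi * Complex.I) := by
        push_cast
        field_simp [hMc]
      rw [this, Complex.exp_int_mul_two_pi_mul_I]
    rw [geom_sum_eq hζ1, hζM, sub_self, zero_div]
    simp [toQ]

lemma fin_dvd_sub_iff (M : ℕ) (t t' : Fin M) :
    (M : ℤ) ∣ ((t' : ℕ) : ℤ) - ((t : ℕ) : ℤ) ↔ t = t' := by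
  constructor
  · rintro ⟨c, hc⟩
    have h1 : ((t' : ℕ) : ℤ) < M := by exact_mod_cast t'.isLt
    have h2 : ((t : ℕ) : ℤ) < M := by exact_mod_cast t.isLt
    have h3 : (0 : ℤ) ≤ ((t' : ℕ) : ℤ) := Int.natCast_nonneg _
    have h4 : (0 : ℤ) ≤ ((t : ℕ) : ℤ) := Int.natCast_nonneg _
    have hM0 : (0 : ℤ) < M := by exact_mod_cast t.pos
    have hcu : c < 1 := by
      by_contra hcl
      push_neg at hcl
      nlinarith [mul_le_mul_of_nonneg_left hcl hM0.le]
    have hcl : -1 < c := by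
      by_contra hcl'
      push_neg at hcl'
      nlinarith [mul_le_mul_of_nonneg_left hcl' hM0.le]
    have hc0 : c = 0 := by omega
    rw [hc0, mul_zero] at hc
    have : (t' : ℕ) = (t : ℕ) := by omega
    exact (Fin.ext this).symm
  · rintro rfl
    simp

/-- 1-D Parseval for the left (i-kernel) transform. -/
lemma parseval_left (M : ℕ) (hM : 0 < M) (g : Fin M → Quaternion ℝ) :
    ∑ u : Fin M,
        Quaternion.normSq (∑ t : Fin M, qexp qI (-(2 * Real.pi * u.val * t.val / M)) * g t) =
      (M : ℝ) * ∑ t : Fin M, Quaternion.normSq (g t) := by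
  have hM' : (M : ℝ) ≠ 0 := Nat.cast_ne_zero.mpr hM.ne'
  have step : ∀ u : Fin M,
      (Quaternion.normSq (∑ t : Fin M, qexp qI (-(2 * Real.pi * u.val * t.val / M)) * g t) : ℝ)
        = ∑ t : Fin M, ∑ t' : Fin M,
            (qexp qI (2 * Real.pi * (((((t' : ℕ) : ℤ) - ((t : ℕ) : ℤ)) : ℤ) * u) / M) *
              (g t * star (g t'))).re := by
    intro u
    set X := ∑ t : Fin M, qexp qI (-(2 * Real.pi * u.val * t.val / M)) * g t with hX
    have h1 : (Quaternion.normSq X : ℝ) = (X * star X).re := by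
      rw [Quaternion.self_mul_star]
      simp
    rw [h1, hX, star_sum, Finset.sum_mul_sum, re_sum]
    refine Finset.sum_congr rfl fun t _ => ?_
    rw [re_sum]
    refine Finset.sum_congr rfl fun t' _ => ?_
    rw [star_mul, star_qexp star_qI]
    have : qexp qI (-(2 * Real.pi * u.val * t.val / M)) * g t *
          (star (g t') * qexp qI (-(-(2 * Real.pi * u.val * t'.val / M)))) =
        (qexp qI (-(2 * Real.pi * u.val * t.val / M)) * (g t * star (g t'))) *
          qexp qI (-(-(2 * Real.pi * u.val * t'.val / M))) := by
      noncomm_ring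
    rw [this, re_mul_comm, ← mul_assoc, qexp_mul qI_mul_qI]
    congr 2
    push_cast
    ring
  simp only [step]
  rw [Finset.sum_comm]
  have swap2 : ∀ t : Fin M, (∑ u : Fin M, ∑ t' : Fin M,
      (qexp qI (2 * Real.pi * (((((t' : ℕ) : ℤ) - ((t : ℕ) : ℤ)) : ℤ) * u) / M) *
        (g t * star (g t'))).re)
      = ∑ t' : Fin M, ∑ u : Fin M,
      (qexp qI (2 * Real.pi * (((((t' : ℕ) : ℤ) - ((t : ℕ) : ℤ)) : ℤ) * u) / M) *
        (g t * star (g t'))).re := fun t => Finset.sum_comm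
  simp only [swap2]
  have inner : ∀ t t' : Fin M,
      (∑ u : Fin M,
        (qexp qI (2 * Real.pi * (((((t' : ℕ) : ℤ) - ((t : ℕ) : ℤ)) : ℤ) * u) / M) *
          (g t * star (g t'))).re)
      = if t = t' then (M : ℝ) * Quaternion.normSq (g t) else 0 := by
    intro t t'
    rw [← re_sum, ← Finset.sum_mul, sum_qexp qI M hM]
    by_cases h : t = t'
    · subst h
      rw [if_pos (by simp), if_pos rfl]
      have : (((M : ℕ) : Quaternion ℝ) * (g t * star (g t))).re
          = (M : ℝ) * (g t * star (g t)).re := by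
        rw [show ((M : ℕ) : Quaternion ℝ) = ((M : ℝ) : Quaternion ℝ) by exact_mod_cast rfl,
          coe_mul_re]
      rw [this, Quaternion.self_mul_star]
      simp
    · rw [if_neg (fun hdvd => h ((fin_dvd_sub_iff M t t').1 hdvd)), if_neg h, zero_mul]
      rfl
  simp only [inner]
  simp only [Finset.sum_ite_eq, Finset.mem_univ, if_true]
  rw [Finset.mul_sum]

/-- 1-D Parseval for the right (j-kernel) transform. -/
lemma parseval_right (N : ℕ) (hN : 0 < N) (h : Fin N → Quaternion ℝ) :
    ∑ v : Fin N,
        Quaternion.normSq (∑ s : Fin N, h s * qexp qJ (-(2 * Real.pi * v.val * s.val / N))) =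
      (N : ℝ) * ∑ s : Fin N, Quaternion.normSq (h s) := by
  have hN' : (N : ℝ) ≠ 0 := Nat.cast_ne_zero.mpr hN.ne'
  have step : ∀ v : Fin N,
      (Quaternion.normSq (∑ s : Fin N, h s * qexp qJ (-(2 * Real.pi * v.val * s.val / N))) : ℝ)
        = ∑ s : Fin N, ∑ s' : Fin N,
            (h s * qexp qJ (2 * Real.pi * (((((s' : ℕ) : ℤ) - ((s : ℕ) : ℤ)) : ℤ) * v) / N) *
              star (h s')).re := by
    intro v
    set X := ∑ s : Fin N, h s * qexp qJ (-(2 * Real.pi * v.val * s.val / N)) with hX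
    have h1 : (Quaternion.normSq X : ℝ) = (X * star X).re := by
      rw [Quaternion.self_mul_star]
      simp
    rw [h1, hX, star_sum, Finset.sum_mul_sum, re_sum]
    refine Finset.sum_congr rfl fun s _ => ?_
    rw [re_sum]
    refine Finset.sum_congr rfl fun s' _ => ?_
    rw [star_mul, star_qexp star_qJ]
    have : h s * qexp qJ (-(2 * Real.pi * v.val * s.val / N)) *
          (qexp qJ (-(-(2 * Real.pi * v.val * s'.val / N))) * star (h s')) =
        h s * (qexp qJ (-(2 * Real.pi * v.val * s.val / N)) *
          qexp qJ (-(-(2 * Real.pi * v.val * s'.val / N)))) * star (h s') := by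
      noncomm_ring
    rw [this, qexp_mul qJ_mul_qJ]
    congr 3
    push_cast
    ring
  simp only [step]
  rw [Finset.sum_comm]
  have swap2 : ∀ s : Fin N, (∑ v : Fin N, ∑ s' : Fin N,
      (h s * qexp qJ (2 * Real.pi * (((((s' : ℕ) : ℤ) - ((s : ℕ) : ℤ)) : ℤ) * v) / N) *
        star (h s')).re)
      = ∑ s' : Fin N, ∑ v : Fin N,
      (h s * qexp qJ (2 * Real.pi * (((((s' : ℕ) : ℤ) - ((s : ℕ) : ℤ)) : ℤ) * v) / N) *
        star (h s')).re := fun s => Finset.sum_comm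
  simp only [swap2]
  have inner : ∀ s s' : Fin N,
      (∑ v : Fin N,
        (h s * qexp qJ (2 * Real.pi * (((((s' : ℕ) : ℤ) - ((s : ℕ) : ℤ)) : ℤ) * v) / N) *
          star (h s')).re)
      = if s = s' then (N : ℝ) * Quaternion.normSq (h s) else 0 := by
    intro s s'
    have pull : ∑ v : Fin N,
        (h s * qexp qJ (2 * Real.pi * (((((s' : ℕ) : ℤ) - ((s : ℕ) : ℤ)) : ℤ) * v) / N) *
          star (h s')).re
        = (h s * (∑ v : Fin N,
            qexp qJ (2 * Real.pi * (((((s' : ℕ) : ℤ) - ((s : ℕ) : ℤ)) : ℤ) * v) / N)) *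
          star (h s')).re := by
      rw [Finset.mul_sum, Finset.sum_mul, re_sum]
    rw [pull, sum_qexp qJ N hN]
    by_cases hss : s = s'
    · subst hss
      rw [if_pos (by simp), if_pos rfl]
      rw [show ((N : ℕ) : Quaternion ℝ) = ((N : ℝ) : Quaternion ℝ) by exact_mod_cast rfl]
      rw [Quaternion.mul_coe_eq_smul, smul_mul_assoc, Quaternion.re_smul,
        Quaternion.self_mul_star]
      simp [smul_eq_mul]
    · rw [if_neg (fun hdvd => hss ((fin_dvd_sub_iff N s s').1 hdvd)), if_neg hss,
        mul_zero, zero_mul]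
      rfl
  simp only [inner]
  simp only [Finset.sum_ite_eq, Finset.mem_univ, if_true]
  rw [Finset.mul_sum]

/-- Parseval / Plancherel identity for the two-sided DQFT. -/
theorem dqft_parseval (M N : ℕ) (hM : 0 < M) (hN : 0 < N)
    (f : Fin M → Fin N → Quaternion ℝ) :
    ∑ u : Fin M, ∑ v : Fin N, ‖dqft M N f u v‖ ^ 2 =
      ∑ t : Fin M, ∑ s : Fin N, ‖f t s‖ ^ 2 := by
  have hMN : (0 : ℝ) < (M : ℝ) * N := by positivity
  have hnormSq : ∀ a : Quaternion ℝ, ‖a‖ ^ 2 = (Quaternion.normSq a : ℝ) := by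
    intro a
    rw [Quaternion.normSq_eq_norm_mul_self, sq]
  -- rewrite dqft as a right transform of left transforms
  have hd : ∀ u v, dqft M N f u v =
      ((Real.sqrt (M * N))⁻¹ : ℝ) •
        (∑ s : Fin N, (∑ t : Fin M, qexp qI (-(2 * Real.pi * u.val * t.val / M)) * f t s) *
          qexp qJ (-(2 * Real.pi * v.val * s.val / N))) := by
    intro u v
    rw [dqft]
    congr 1
    rw [Finset.sum_comm]
    exact Finset.sum_congr rfl fun s _ => (Finset.sum_mul _ _ _).symm
  simp only [hd, hnormSq]
  have hsm : ∀ (a : Quaternion ℝ),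
      (Quaternion.normSq (((Real.sqrt ((M : ℝ) * N))⁻¹ : ℝ) • a) : ℝ)
        = ((M : ℝ) * N)⁻¹ * Quaternion.normSq a := by
    intro a
    rw [Quaternion.normSq_smul, inv_pow, Real.sq_sqrt hMN.le]
  simp only [hsm]
  simp only [← Finset.mul_sum]
  rw [show ∑ u : Fin M, ∑ v : Fin N,
      Quaternion.normSq (∑ s : Fin N,
        (∑ t : Fin M, qexp qI (-(2 * Real.pi * u.val * t.val / M)) * f t s) *
          qexp qJ (-(2 * Real.pi * v.val * s.val / N)))
      = ∑ u : Fin M, (N : ℝ) * ∑ s : Fin N, Quaternion.normSq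
          (∑ t : Fin M, qexp qI (-(2 * Real.pi * u.val * t.val / M)) * f t s)
    from Finset.sum_congr rfl fun u _ => parseval_right N hN _]
  rw [← Finset.mul_sum, Finset.sum_comm]
  rw [show ∑ s : Fin N, ∑ u : Fin M, Quaternion.normSq
        (∑ t : Fin M, qexp qI (-(2 * Real.pi * u.val * t.val / M)) * f t s)
      = ∑ s : Fin N, (M : ℝ) * ∑ t : Fin M, Quaternion.normSq (f t s)
    from Finset.sum_congr rfl fun s _ => parseval_left M hM fun t => f t s]
  rw [← Finset.mul_sum, Finset.sum_comm]
  field_simp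
end

section
/- Let M,N be positive integers and let f:{0,…,M−1}×{0,…,N−1}→ℍ be a discrete quaternion signal with exactly N_{(t,s)} nonzero values and DQFT f̂. Then for every u∈{0,…,M−1}, v∈{0,…,N−1}, |f̂(u,v)|² ≤ (N_{(t,s)}/(MN)) · ∑_{t,s} |f(t,s)|². -/
open scoped BigOperators Classical

/-- Pointwise bound on DQFT values in terms of the number of nonzeros of `f`. -/
theorem dqft_pointwise_bound (M N : ℕ) (hM : 0 < M) (hN : 0 < N)
    (f : Fin M → Fin N → Quaternion ℝ) (Nts : ℕ)
    (hNts : Nts = (Finset.univ.filter (fun p : Fin M × Fin N => f p.1 p.2 ≠ 0)).card) :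
    ∀ (u : Fin M) (v : Fin N),
      ‖dqft M N f u v‖ ^ 2 ≤
        ((Nts : ℝ) / (M * N)) * ∑ t : Fin M, ∑ s : Fin N, ‖f t s‖ ^ 2 := by
  intro u v
  set supp := (Finset.univ.filter (fun p : Fin M × Fin N => f p.1 p.2 ≠ 0)) with hsupp
  have hMN : (0:ℝ) < (M:ℝ) * N := by positivity
  -- Step 1: norm bound
  have h1 : ‖dqft M N f u v‖ ≤ (Real.sqrt (M * N))⁻¹ * ∑ p ∈ supp, ‖f p.1 p.2‖ := by
    rw [dqft, norm_smul, Real.norm_eq_abs, abs_of_nonneg (by positivity)]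
    gcongr
    calc ‖∑ t : Fin M, ∑ s : Fin N,
        qexp qI (-(2 * Real.pi * u.val * t.val / M)) * f t s *
          qexp qJ (-(2 * Real.pi * v.val * s.val / N))‖
        ≤ ∑ t : Fin M, ∑ s : Fin N, ‖qexp qI (-(2 * Real.pi * u.val * t.val / M)) * f t s *
          qexp qJ (-(2 * Real.pi * v.val * s.val / N))‖ := by
          refine (norm_sum_le _ _).trans ?_
          exact Finset.sum_le_sum fun t _ => norm_sum_le _ _
      _ = ∑ t : Fin M, ∑ s : Fin N, ‖f t s‖ := by
          refine Finset.sum_congr rfl fun t _ => Finset.sum_congr rfl fun s _ => ?_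
          rw [norm_mul, norm_mul, norm_qexp_qI, norm_qexp_qJ, one_mul, mul_one]
      _ = ∑ p : Fin M × Fin N, ‖f p.1 p.2‖ := by
          rw [← Finset.sum_product', Finset.univ_product_univ]
      _ = ∑ p ∈ supp, ‖f p.1 p.2‖ := by
          refine (Finset.sum_subset (Finset.filter_subset _ _) ?_).symm
          intro p _ hp
          simp only [hsupp, Finset.mem_filter, Finset.mem_univ, true_and, not_not] at hp
          simp [hp]
  -- Step 2: Cauchy–Schwarz
  have h2 : (∑ p ∈ supp, ‖f p.1 p.2‖) ^ 2 ≤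
      (Nts : ℝ) * ∑ p ∈ supp, ‖f p.1 p.2‖ ^ 2 := by
    have hcs := Finset.sum_mul_sq_le_sq_mul_sq supp (fun _ => (1:ℝ)) (fun p => ‖f p.1 p.2‖)
    simp only [one_mul, one_pow, Finset.sum_const, nsmul_eq_mul, mul_one] at hcs
    rw [hNts]
    exact hcs
  -- Step 3: restrict to support of squares
  have h3 : (∑ p ∈ supp, ‖f p.1 p.2‖ ^ 2) ≤ ∑ t : Fin M, ∑ s : Fin N, ‖f t s‖ ^ 2 := by
    rw [← Finset.sum_product']
    exact Finset.sum_le_sum_of_subset_of_nonneg (Finset.filter_subset _ _)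
      (fun p _ _ => by positivity)
  -- Combine
  have hnn : (0:ℝ) ≤ ‖dqft M N f u v‖ := norm_nonneg _
  have h4 : ‖dqft M N f u v‖ ^ 2 ≤
      ((Real.sqrt (M * N))⁻¹ * ∑ p ∈ supp, ‖f p.1 p.2‖) ^ 2 :=
    pow_le_pow_left₀ hnn h1 2
  have hsq : ((Real.sqrt (M * N))⁻¹) ^ 2 = ((M:ℝ) * N)⁻¹ := by
    rw [← Real.sqrt_inv, Real.sq_sqrt (by positivity)]
  calc ‖dqft M N f u v‖ ^ 2
      ≤ ((Real.sqrt (M * N))⁻¹ * ∑ p ∈ supp, ‖f p.1 p.2‖) ^ 2 := h4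
    _ = ((M:ℝ) * N)⁻¹ * (∑ p ∈ supp, ‖f p.1 p.2‖) ^ 2 := by
        rw [mul_pow, hsq]
    _ ≤ ((M:ℝ) * N)⁻¹ * ((Nts : ℝ) * ∑ p ∈ supp, ‖f p.1 p.2‖ ^ 2) := by
        gcongr
    _ ≤ ((M:ℝ) * N)⁻¹ * ((Nts : ℝ) * ∑ t : Fin M, ∑ s : Fin N, ‖f t s‖ ^ 2) := by
        gcongr
    _ = ((Nts : ℝ) / (M * N)) * ∑ t : Fin M, ∑ s : Fin N, ‖f t s‖ ^ 2 := by
        ring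
end
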